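/- arXiv:1511.06619 — 3 statements merged into one kernel-verified Lean document; each statement's English description precedes it below -/
import Mathlib

section
/- If f : [a,b] → ℝ is convex with a < b, then f((a+b)/2) ≤ (1/(b-a)) ∫_a^b f(x) dx ≤ (f(a)+f(b))/2. -/
/-! The symmetrization `g x = (f x + f (a + b - x)) / 2` has the same integral over `[a, b]` as `f`,
and convexity squeezes it pointwise: `f ((a + b) / 2) ≤ g x` by midpoint convexity, and
`g x ≤ (f a + f b) / 2` because `x` and `a + b - x` are mirror-image convex combinations of `a`
and `b`. Averaging these bounds over `[a, b]` gives both inequalities. -/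

open MeasureTheory Set

theorem ConvexOn.map_add_map_swap_le {𝕜 E β : Type*} [Semiring 𝕜] [PartialOrder 𝕜]
    [AddCommMonoid E] [AddCommMonoid β] [PartialOrder β] [IsOrderedAddMonoid β]
    [SMul 𝕜 E] [Module 𝕜 β] {s : Set E} {f : E → β} (hf : ConvexOn 𝕜 s f)
    {x y : E} (hx : x ∈ s) (hy : y ∈ s) {a b : 𝕜} (ha : 0 ≤ a) (hb : 0 ≤ b) (hab : a + b = 1) :
    f (a • x + b • y) + f (b • x + a • y) ≤ f x + f y :=
  calc f (a • x + b • y) + f (b • x + a • y)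
      ≤ (a • f x + b • f y) + (b • f x + a • f y) :=
        add_le_add (hf.2 hx hy ha hb hab) (hf.2 hx hy hb ha ((add_comm b a).trans hab))
    _ = f x + f y := by
      rw [add_add_add_comm, ← add_smul, ← add_smul, add_comm b a, hab, one_smul, one_smul]

theorem ConvexOn.map_add_div_two_le {s : Set ℝ} {f : ℝ → ℝ} (hf : ConvexOn ℝ s f)
    {x y : ℝ} (hx : x ∈ s) (hy : y ∈ s) : f ((x + y) / 2) ≤ (f x + f y) / 2 := by
  have hmid : (x + y) / 2 = (1 / 2 : ℝ) • x + (1 / 2 : ℝ) • y := by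
    simp only [smul_eq_mul]; ring
  rw [hmid]
  refine (hf.2 hx hy (by norm_num) (by norm_num) (by norm_num)).trans_eq ?_
  simp only [smul_eq_mul]; ring

theorem ConvexOn.map_add_map_add_sub_le {f : ℝ → ℝ} {a b x : ℝ} (hf : ConvexOn ℝ (Icc a b) f)
    (hx : x ∈ Icc a b) : f x + f (a + b - x) ≤ f a + f b := by
  rw [← segment_eq_Icc (hx.1.trans hx.2)] at hf hx
  obtain ⟨s, t, hs, ht, hst, rfl⟩ := hx
  have hreflect : a + b - (s • a + t • b) = t • a + s • b := by
    simp only [smul_eq_mul]; linear_combination -(a + b) * hst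
  rw [hreflect]
  exact hf.map_add_map_swap_le (left_mem_segment ℝ a b) (right_mem_segment ℝ a b) hs ht hst

theorem IntervalIntegrable.comp_add_sub {f : ℝ → ℝ} {a b : ℝ}
    (hf : IntervalIntegrable f volume a b) :
    IntervalIntegrable (fun x => f (a + b - x)) volume a b := by
  simpa using (hf.comp_sub_left (a + b)).symm

namespace intervalIntegral

theorem integral_comp_add_sub (f : ℝ → ℝ) (a b : ℝ) :
    ∫ x in a..b, f (a + b - x) = ∫ x in a..b, f x := by
  simp [integral_comp_sub_left]

theorem integral_symmetrize {f : ℝ → ℝ} {a b : ℝ}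
    (hf : IntervalIntegrable f volume a b) :
    ∫ x in a..b, (f x + f (a + b - x)) / 2 = ∫ x in a..b, f x := by
  rw [integral_div, integral_add hf hf.comp_add_sub, integral_comp_add_sub]
  ring

theorem le_one_div_mul_integral {f : ℝ → ℝ} {a b c : ℝ} (hab : a < b)
    (hf : IntervalIntegrable f volume a b) (h : ∀ x ∈ Icc a b, c ≤ f x) :
    c ≤ 1 / (b - a) * ∫ x in a..b, f x := by
  have := integral_mono_on hab.le intervalIntegrable_const hf h
  rw [integral_const, smul_eq_mul] at this
  rw [one_div_mul_eq_div, le_div_iff₀ (sub_pos.2 hab), mul_comm]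
  exact this

theorem one_div_mul_integral_le {f : ℝ → ℝ} {a b c : ℝ} (hab : a < b)
    (hf : IntervalIntegrable f volume a b) (h : ∀ x ∈ Icc a b, f x ≤ c) :
    1 / (b - a) * ∫ x in a..b, f x ≤ c := by
  have := integral_mono_on hab.le hf intervalIntegrable_const h
  rw [integral_const, smul_eq_mul] at this
  rw [one_div_mul_eq_div, div_le_iff₀ (sub_pos.2 hab), mul_comm]
  exact this

end intervalIntegral

theorem hermite_hadamard
    (f : ℝ → ℝ) (a b : ℝ) (hab : a < b)
    (hconv : ConvexOn ℝ (Set.Icc a b) f)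
    (hint : IntervalIntegrable f MeasureTheory.volume a b) :
    f ((a + b) / 2) ≤ (1 / (b - a)) * ∫ x in a..b, f x ∧
      (1 / (b - a)) * ∫ x in a..b, f x ≤ (f a + f b) / 2 := by
  have hsymm : IntervalIntegrable (fun x => (f x + f (a + b - x)) / 2) volume a b :=
    (hint.add hint.comp_add_sub).div_const 2
  rw [← intervalIntegral.integral_symmetrize hint]
  refine ⟨intervalIntegral.le_one_div_mul_integral hab hsymm fun x hx => ?_,
    intervalIntegral.one_div_mul_integral_le hab hsymm fun x hx => ?_⟩
  · have hreflect : a + b - x ∈ Icc a b := ⟨by linarith [hx.2], by linarith [hx.1]⟩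
    simpa using hconv.map_add_div_two_le hx hreflect
  · linarith [hconv.map_add_map_add_sub_le hx]
end

section
/- If f : [a,b] → ℝ is convex and g : [a,b] → ℝ is nonnegative, integrable, and symmetric about (a+b)/2 (i.e., g(a+b-x) = g(x) for all x ∈ [a,b]), then f((a+b)/2) ∫_a^b g(x) dx ≤ ∫_a^b f(x) g(x) dx ≤ ((f(a)+f(b))/2) ∫_a^b g(x) dx. -/
/-!
Pairing each `x` with its reflection `a + b - x`, convexity gives
`2 f((a+b)/2) ≤ f x + f (a + b - x) ≤ f a + f b` on `[a, b]`. Multiplying by `g x ≥ 0` and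
integrating, the symmetry of `g` turns `∫ f (a + b - x) g x` into `∫ f x g x`, so the middle term
integrates to `2 ∫ f g`.
-/

open MeasureTheory Set intervalIntegral

section Convex

variable {E : Type*} [AddCommGroup E] [Module ℝ E] {s : Set E} {f : E → ℝ} {x y z : E}

theorem ConvexOn.map_midpoint_le (hf : ConvexOn ℝ s f) (hx : x ∈ s) (hy : y ∈ s) :
    f (midpoint ℝ x y) ≤ (f x + f y) / 2 := by
  have h := hf.2 hx hy (by norm_num : (0 : ℝ) ≤ 2⁻¹) (by norm_num : (0 : ℝ) ≤ 2⁻¹)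
    (by norm_num)
  rw [midpoint_eq_smul_add, smul_add, invOf_eq_inv]
  simp only [smul_eq_mul] at h
  linarith

theorem ConvexOn.map_add_map_reflect_le (hf : ConvexOn ℝ s f) (hx : x ∈ s) (hy : y ∈ s)
    (hz : z ∈ segment ℝ x y) : f z + f (x + y - z) ≤ f x + f y := by
  obtain ⟨p, q, hp, hq, hpq, rfl⟩ := hz
  have hreflect : x + y - (p • x + q • y) = q • x + p • y := by
    rw [← one_smul ℝ (x + y), ← hpq]
    module
  rw [hreflect]
  have h₁ := hf.2 hx hy hp hq hpq
  have h₂ := hf.2 hx hy hq hp (by rw [add_comm, hpq])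
  simp only [smul_eq_mul] at h₁ h₂
  linear_combination h₁ + h₂ + (f x + f y) * hpq

end Convex

theorem Set.add_sub_mem_Icc {α : Type*} [AddCommGroup α] [PartialOrder α] [IsOrderedAddMonoid α]
    {a b x : α} (hx : x ∈ Icc a b) : a + b - x ∈ Icc a b := by
  rwa [sub_mem_Icc_iff_right, add_sub_cancel_right, add_sub_cancel_left]

section Interval

variable {f : ℝ → ℝ} {a b x : ℝ}

theorem ConvexOn.map_add_div_two_le_of_mem_Icc (hf : ConvexOn ℝ (Icc a b) f) (hx : x ∈ Icc a b) :
    f ((a + b) / 2) ≤ (f x + f (a + b - x)) / 2 := by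
  have h := hf.map_midpoint_le hx (add_sub_mem_Icc hx)
  rwa [midpoint_eq_smul_add, add_sub_cancel, invOf_eq_inv, smul_eq_mul, inv_mul_eq_div] at h

theorem ConvexOn.add_map_reflect_le_of_mem_Icc (hf : ConvexOn ℝ (Icc a b) f)
    (hx : x ∈ Icc a b) : f x + f (a + b - x) ≤ f a + f b := by
  have hab : a ≤ b := hx.1.trans hx.2
  rw [← segment_eq_Icc hab] at hx
  exact hf.map_add_map_reflect_le (left_mem_Icc.2 hab) (right_mem_Icc.2 hab) hx

end Interval

section Reflection

variable {φ g : ℝ → ℝ} {a b : ℝ}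

theorem IntervalIntegrable.comp_reflect_mul_of_symm
    (hφg : IntervalIntegrable (fun x => φ x * g x) volume a b)
    (hg : ∀ x ∈ uIcc a b, g (a + b - x) = g x) :
    IntervalIntegrable (fun x => φ (a + b - x) * g x) volume a b := by
  have h := hφg.comp_sub_left (a + b)
  rw [add_sub_cancel_right, add_sub_cancel_left] at h
  exact h.symm.congr fun x hx => by rw [hg x (uIoc_subset_uIcc hx)]

theorem intervalIntegral.integral_comp_reflect_mul_of_symm
    (hg : ∀ x ∈ uIcc a b, g (a + b - x) = g x) :
    ∫ x in a..b, φ (a + b - x) * g x = ∫ x in a..b, φ x * g x :=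
  calc ∫ x in a..b, φ (a + b - x) * g x
      = ∫ x in a..b, φ (a + b - x) * g (a + b - x) :=
        integral_congr fun x hx => by rw [hg x hx]
    _ = ∫ x in a..b, φ x * g x := by
        rw [integral_comp_sub_left (fun y => φ y * g y) (a + b), add_sub_cancel_right,
          add_sub_cancel_left]

theorem IntervalIntegrable.add_comp_reflect_mul_of_symm
    (hφg : IntervalIntegrable (fun x => φ x * g x) volume a b)
    (hg : ∀ x ∈ uIcc a b, g (a + b - x) = g x) :
    IntervalIntegrable (fun x => (φ x + φ (a + b - x)) * g x) volume a b := by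
  simpa only [add_mul] using hφg.add (hφg.comp_reflect_mul_of_symm hg)

theorem intervalIntegral.integral_add_comp_reflect_mul_of_symm
    (hφg : IntervalIntegrable (fun x => φ x * g x) volume a b)
    (hg : ∀ x ∈ uIcc a b, g (a + b - x) = g x) :
    ∫ x in a..b, (φ x + φ (a + b - x)) * g x = 2 * ∫ x in a..b, φ x * g x := by
  simp only [add_mul]
  rw [integral_add hφg (hφg.comp_reflect_mul_of_symm hg), integral_comp_reflect_mul_of_symm hg]
  ring

end Reflection

theorem hermite_hadamard_fejer
    (f g : ℝ → ℝ) (a b : ℝ) (hab : a < b)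
    (hconv : ConvexOn ℝ (Set.Icc a b) f)
    (hg_nonneg : ∀ x ∈ Set.Icc a b, 0 ≤ g x)
    (hg_int : IntervalIntegrable g MeasureTheory.volume a b)
    (hfg_int : IntervalIntegrable (fun x => f x * g x) MeasureTheory.volume a b)
    (hg_symm : ∀ x ∈ Set.Icc a b, g (a + b - x) = g x) :
    f ((a + b) / 2) * ∫ x in a..b, g x ≤ ∫ x in a..b, f x * g x ∧
      ∫ x in a..b, f x * g x ≤ ((f a + f b) / 2) * ∫ x in a..b, g x := by
  rw [← uIcc_of_le hab.le] at hg_symm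
  have hsum_int := hfg_int.add_comp_reflect_mul_of_symm hg_symm
  have hsum := integral_add_comp_reflect_mul_of_symm hfg_int hg_symm
  constructor
  · have h := integral_mono_on hab.le (hg_int.const_mul (2 * f ((a + b) / 2))) hsum_int
      fun x hx => mul_le_mul_of_nonneg_right
        (by linarith [hconv.map_add_div_two_le_of_mem_Icc hx]) (hg_nonneg x hx)
    rw [intervalIntegral.integral_const_mul, hsum] at h
    linarith
  · have h := integral_mono_on hab.le hsum_int (hg_int.const_mul (f a + f b))
      fun x hx => mul_le_mul_of_nonneg_right
        (hconv.add_map_reflect_le_of_mem_Icc hx) (hg_nonneg x hx)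
    rw [intervalIntegral.integral_const_mul, hsum] at h
    linarith
end

section
/- Specializing h(x) = x in the generalized bound: let f be differentiable on (a,b) with |f'| convex on [a,b], g continuous, α > 0. Then |f((a+b)/2)[J_{((a+b)/2)-}^α g(a) + J_{((a+b)/2)+}^α g(b)] − [J_{((a+b)/2)-}^α (gf)(a) + J_{((a+b)/2)+}^α (gf)(b)]| ≤ (‖g‖_{∞,[a,(a+b)/2]}/((b-a)Γ(α+1))) { |f'(a)| [ ((b-a)/2)^{α+1}(b-a)/(α+1) − ((b-a)/2)^{α+2}/(α+2) ] + |f'(b)| ((b-a)/2)^{α+2}/(α+2) } + (‖g‖_{∞,[(a+b)/2,b]}/((b-a)Γ(α+1))) { |f'(b)| [ ((b-a)/2)^{α+1}(b-a)/(α+1) − ((b-a)/2)^{α+2}/(α+2) ] + |f'(a)| ((b-a)/2)^{α+2}/(α+2) }. -/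
/-!
Write `m = (a + b) / 2`. On each half the quantity to bound is `∫ w t * g t * (f m - f t)` for a
Riemann–Liouville weight `w`. Convexity puts `|f'|` below its chord through `(a, |f' a|)` and
`(b, |f' b|)`, so by the mean value inequality `|f m - f t|` is at most the increment between `t`
and `m` of a quadratic primitive `F` of that chord. Pulling out `sup |g|`, what remains is the
integral of `(t - a) ^ (α - 1)` against the quadratic `F m - F t`, computed in closed form. The
right half is the left half of the reflected functions `t ↦ f (a + b - t)`, `t ↦ g (a + b - t)`.
-/

open Set MeasureTheory intervalIntegral

theorem ConvexOn.le_chord {φ : ℝ → ℝ} {a b s : ℝ} (hφ : ConvexOn ℝ (Icc a b) φ) (hab : a < b)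
    (hs : s ∈ Icc a b) : φ s ≤ ((b - s) * φ a + (s - a) * φ b) / (b - a) := by
  have hba : 0 < b - a := sub_pos.2 hab
  have hcvx := hφ.2 (left_mem_Icc.2 hab.le) (right_mem_Icc.2 hab.le)
    (div_nonneg (sub_nonneg.2 hs.2) hba.le) (div_nonneg (sub_nonneg.2 hs.1) hba.le)
    (by field_simp; ring)
  have hcomb : ((b - s) / (b - a)) • a + ((s - a) / (b - a)) • b = s := by
    simp only [smul_eq_mul]
    field_simp
    ring
  rw [hcomb] at hcvx
  refine hcvx.trans_eq ?_
  simp only [smul_eq_mul]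
  ring

theorem ConvexOn.comp_reflect {φ : ℝ → ℝ} {a b : ℝ} (hφ : ConvexOn ℝ (Icc a b) φ) :
    ConvexOn ℝ (Icc a b) fun x => φ (a + b - x) := by
  refine ⟨convex_Icc a b, fun x hx y hy p q hp hq hpq => ?_⟩
  have hmem : ∀ z ∈ Icc a b, a + b - z ∈ Icc a b := fun z hz =>
    ⟨by linarith [hz.2], by linarith [hz.1]⟩
  have h := hφ.2 (hmem x hx) (hmem y hy) hp hq hpq
  simp only [smul_eq_mul] at h ⊢
  calc φ (a + b - (p * x + q * y)) = φ (p * (a + b - x) + q * (a + b - y)) := by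
        congr 1
        linear_combination -(a + b) * hpq
    _ ≤ _ := h

noncomputable def chordPrimitive (a b A B s : ℝ) : ℝ :=
  (B * (s - a) ^ 2 - A * (b - s) ^ 2) / (2 * (b - a))

theorem hasDerivAt_chordPrimitive (a b A B s : ℝ) :
    HasDerivAt (chordPrimitive a b A B) (((b - s) * A + (s - a) * B) / (b - a)) s := by
  have h := (((hasDerivAt_id s).sub_const a).pow 2 |>.const_mul B).sub
    (((hasDerivAt_id s).const_sub b).pow 2 |>.const_mul A) |>.div_const (2 * (b - a))
  refine h.congr_deriv ?_
  rw [div_mul_eq_div_div_swap]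
  simp only [id]
  ring

theorem continuous_chordPrimitive (a b A B : ℝ) : Continuous (chordPrimitive a b A B) :=
  continuous_iff_continuousAt.2 fun s => (hasDerivAt_chordPrimitive a b A B s).continuousAt

theorem abs_sub_le_chordPrimitive_sub {f f' : ℝ → ℝ} {a b x y : ℝ} (hab : a < b)
    (hf : ∀ t ∈ Ioo a b, HasDerivAt f (f' t) t) (hconv : ConvexOn ℝ (Icc a b) fun t => |f' t|)
    (hx : a < x) (hxy : x ≤ y) (hy : y < b) :
    |f y - f x| ≤ chordPrimitive a b |f' a| |f' b| y - chordPrimitive a b |f' a| |f' b| x := by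
  have hsub : Icc x y ⊆ Ioo a b := Icc_subset_Ioo hx hy
  refine image_norm_le_of_norm_deriv_right_le_deriv_boundary (f := fun t => f t - f x)
    (fun t ht => ((hf t (hsub ht)).continuousAt.sub continuousAt_const).continuousWithinAt)
    (fun t ht => ((hf t (hsub (Ico_subset_Icc_self ht))).sub_const (f x)).hasDerivWithinAt)
    (by simp) (fun t => (hasDerivAt_chordPrimitive a b _ _ t).sub_const _)
    (fun t ht => hconv.le_chord hab (Ioo_subset_Icc_self (hsub (Ico_subset_Icc_self ht))))
    ⟨hxy, le_rfl⟩

theorem intervalIntegrable_rpow_sub {a m α : ℝ} (hα : 0 < α) :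
    IntervalIntegrable (fun t => (t - a) ^ (α - 1)) volume a m := by
  simpa using
    (intervalIntegrable_rpow' (a := 0) (b := m - a) (by linarith : -1 < α - 1)).comp_sub_right a

theorem intervalIntegrable_rpow_sub_mul_of_bdd {φ : ℝ → ℝ} {a m α C : ℝ} (ham : a ≤ m) (hα : 0 < α)
    (hφ : AEStronglyMeasurable φ (volume.restrict (Ioc a m))) (hC : ∀ t ∈ Ioc a m, |φ t| ≤ C) :
    IntervalIntegrable (fun t => (t - a) ^ (α - 1) * φ t) volume a m := by
  rw [intervalIntegrable_iff_integrableOn_Ioc_of_le ham]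
  refine ((intervalIntegrable_rpow_sub hα).1).mul_bdd (c := C) hφ ?_
  exact (ae_restrict_iff' measurableSet_Ioc).2 (Filter.Eventually.of_forall hC)

theorem abs_mul_integral_sub_integral_le {f g P : ℝ → ℝ} {a m α M : ℝ} (ham : a ≤ m) (hα : 0 < α)
    (hf : ContinuousOn f (Ioc a m)) (hg : ContinuousOn g (Icc a m)) (hP : ContinuousOn P (Icc a m))
    (hgM : ∀ t ∈ Icc a m, |g t| ≤ M) (hfP : ∀ t ∈ Ioc a m, |f m - f t| ≤ P t) :
    |f m * (∫ t in a..m, (t - a) ^ (α - 1) * g t) - ∫ t in a..m, (t - a) ^ (α - 1) * (g t * f t)| ≤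
      M * ∫ t in a..m, (t - a) ^ (α - 1) * P t := by
  obtain ⟨C, hC⟩ := isCompact_Icc.exists_bound_of_continuousOn hP
  have hg_meas : AEStronglyMeasurable g (volume.restrict (Ioc a m)) :=
    (hg.mono Ioc_subset_Icc_self).aestronglyMeasurable measurableSet_Ioc
  have hf_meas : AEStronglyMeasurable f (volume.restrict (Ioc a m)) :=
    hf.aestronglyMeasurable measurableSet_Ioc
  have hf_bdd : ∀ t ∈ Ioc a m, |f t| ≤ |f m| + C := fun t ht => by
    have hPC : P t ≤ C := (le_abs_self _).trans (hC t (Ioc_subset_Icc_self ht))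
    linarith [abs_sub_abs_le_abs_sub (f t) (f m), abs_sub_comm (f t) (f m), hfP t ht]
  have hM : 0 ≤ M := (abs_nonneg _).trans (hgM a (left_mem_Icc.2 ham))
  have hg_int : IntervalIntegrable (fun t => (t - a) ^ (α - 1) * g t) volume a m :=
    intervalIntegrable_rpow_sub_mul_of_bdd ham hα hg_meas fun t ht => hgM t (Ioc_subset_Icc_self ht)
  have hgf_int : IntervalIntegrable (fun t => (t - a) ^ (α - 1) * (g t * f t)) volume a m :=
    intervalIntegrable_rpow_sub_mul_of_bdd ham hα (hg_meas.mul hf_meas) fun t ht => by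
      rw [abs_mul]
      exact mul_le_mul (hgM t (Ioc_subset_Icc_self ht)) (hf_bdd t ht) (abs_nonneg _) hM
  have hP_int : IntervalIntegrable (fun t => (t - a) ^ (α - 1) * P t) volume a m :=
    intervalIntegrable_rpow_sub_mul_of_bdd ham hα
      ((hP.mono Ioc_subset_Icc_self).aestronglyMeasurable measurableSet_Ioc)
      fun t ht => hC t (Ioc_subset_Icc_self ht)
  have hdiff : f m * (∫ t in a..m, (t - a) ^ (α - 1) * g t) -
      ∫ t in a..m, (t - a) ^ (α - 1) * (g t * f t) =
      ∫ t in a..m, (t - a) ^ (α - 1) * (g t * (f m - f t)) := by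
    rw [← intervalIntegral.integral_const_mul, ← integral_sub (hg_int.const_mul _) hgf_int]
    exact integral_congr fun t _ => by ring
  rw [hdiff, ← intervalIntegral.integral_const_mul, ← Real.norm_eq_abs]
  refine norm_integral_le_of_norm_le ham ?_ (hP_int.const_mul M)
  refine Filter.Eventually.of_forall fun t ht => ?_
  have hw : 0 ≤ (t - a) ^ (α - 1) := Real.rpow_nonneg (sub_nonneg.2 ht.1.le) _
  rw [Real.norm_eq_abs, abs_mul, abs_mul, abs_of_nonneg hw, mul_left_comm M]
  exact mul_le_mul_of_nonneg_left
    (mul_le_mul (hgM t (Ioc_subset_Icc_self ht)) (hfP t ht) (abs_nonneg _) hM) hw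

theorem integral_rpow_sub_comp_reflect (φ : ℝ → ℝ) (a b c α : ℝ) :
    ∫ t in c..b, (b - t) ^ (α - 1) * φ t =
      ∫ t in a..(a + b - c), (t - a) ^ (α - 1) * φ (a + b - t) := by
  have h := integral_comp_sub_left (a := a) (b := a + b - c)
    (fun t => (b - t) ^ (α - 1) * φ t) (a + b)
  rw [add_sub_cancel_left, sub_sub_cancel] at h
  rw [← h]
  congr 1
  ext t
  rw [show b - (a + b - t) = t - a by ring]

theorem integral_rpow_mul_pow {α h : ℝ} (hα : 0 < α) (hh : 0 ≤ h) (k : ℕ) :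
    ∫ u in (0 : ℝ)..h, u ^ (α - 1) * u ^ k = h ^ (α + k) / (α + k) := by
  have hk : 0 < α + k := by positivity
  calc ∫ u in (0 : ℝ)..h, u ^ (α - 1) * u ^ k = ∫ u in (0 : ℝ)..h, u ^ (α + k - 1) := by
        refine integral_congr_ae (Filter.Eventually.of_forall fun u hu => ?_)
        rw [uIoc_of_le hh] at hu
        rw [← Real.rpow_natCast, ← Real.rpow_add hu.1]
        ring_nf
    _ = h ^ (α + k) / (α + k) := by
        rw [integral_rpow (Or.inl (by linarith)), sub_add_cancel, Real.zero_rpow hk.ne', sub_zero]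

theorem integral_rpow_mul_quadratic {α h : ℝ} (hα : 0 < α) (hh : 0 ≤ h) (c₀ c₁ c₂ : ℝ) :
    ∫ u in (0 : ℝ)..h, u ^ (α - 1) * (c₀ + c₁ * u + c₂ * u ^ 2) =
      c₀ * h ^ α / α + c₁ * h ^ (α + 1) / (α + 1) + c₂ * h ^ (α + 2) / (α + 2) := by
  have hint : ∀ k : ℕ, IntervalIntegrable (fun u : ℝ => u ^ (α - 1) * u ^ k) volume 0 h :=
    fun k => (intervalIntegrable_rpow' (by linarith)).mul_continuousOn (by fun_prop)
  have hsplit : ∀ u : ℝ, u ^ (α - 1) * (c₀ + c₁ * u + c₂ * u ^ 2) =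
      c₀ * (u ^ (α - 1) * u ^ 0) + c₁ * (u ^ (α - 1) * u ^ 1) + c₂ * (u ^ (α - 1) * u ^ 2) :=
    fun u => by ring
  simp only [hsplit]
  rw [integral_add (((hint 0).const_mul _).add ((hint 1).const_mul _)) ((hint 2).const_mul _),
    integral_add ((hint 0).const_mul _) ((hint 1).const_mul _), intervalIntegral.integral_const_mul,
    intervalIntegral.integral_const_mul, intervalIntegral.integral_const_mul,
    integral_rpow_mul_pow hα hh, integral_rpow_mul_pow hα hh, integral_rpow_mul_pow hα hh]
  push_cast
  ring_nf

theorem integral_rpow_sub_mul_chordPrimitive_sub {a b α : ℝ} (hab : a < b) (hα : 0 < α) (A B : ℝ) :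
    ∫ t in a..(a + b) / 2, (t - a) ^ (α - 1) *
        (chordPrimitive a b A B ((a + b) / 2) - chordPrimitive a b A B t) =
      (A * (((b - a) / 2) ^ (α + 1) * (b - a) / (α + 1) - ((b - a) / 2) ^ (α + 2) / (α + 2)) +
        B * (((b - a) / 2) ^ (α + 2) / (α + 2))) / ((b - a) * α) := by
  obtain ⟨h, hh, rfl⟩ : ∃ h, 0 < h ∧ b = a + 2 * h := ⟨(b - a) / 2, by linarith, by ring⟩
  have hpoly : ∀ u, chordPrimitive a (a + 2 * h) A B ((a + (a + 2 * h)) / 2) -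
      chordPrimitive a (a + 2 * h) A B (u + a) =
        (3 * A + B) * h / 4 + -A * u + (A - B) / (4 * h) * u ^ 2 := fun u => by
    unfold chordPrimitive
    field_simp
    ring
  have hsub := integral_comp_sub_right (a := a) (b := (a + (a + 2 * h)) / 2)
    (fun u => u ^ (α - 1) * (chordPrimitive a (a + 2 * h) A B ((a + (a + 2 * h)) / 2) -
      chordPrimitive a (a + 2 * h) A B (u + a))) a
  simp only [sub_add_cancel, sub_self, hpoly] at hsub
  rw [hsub, show (a + (a + 2 * h)) / 2 - a = h by ring, show (a + 2 * h - a) / 2 = h by ring,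
    show a + 2 * h - a = 2 * h by ring, integral_rpow_mul_quadratic hα hh.le,
    Real.rpow_add hh, Real.rpow_add hh, Real.rpow_one, Real.rpow_two]
  field_simp
  ring

theorem abs_midpoint_mul_integral_sub_integral_le {f f' g : ℝ → ℝ} {a b α M : ℝ} (hab : a < b)
    (hα : 0 < α) (hf : ∀ x ∈ Ioo a b, HasDerivAt f (f' x) x)
    (hconv : ConvexOn ℝ (Icc a b) fun x => |f' x|) (hg : ContinuousOn g (Icc a ((a + b) / 2)))
    (hgM : ∀ t ∈ Icc a ((a + b) / 2), |g t| ≤ M) :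
    |f ((a + b) / 2) * (∫ t in a..(a + b) / 2, (t - a) ^ (α - 1) * g t) -
        ∫ t in a..(a + b) / 2, (t - a) ^ (α - 1) * (g t * f t)| ≤
      M * ((|f' a| * (((b - a) / 2) ^ (α + 1) * (b - a) / (α + 1) -
          ((b - a) / 2) ^ (α + 2) / (α + 2)) + |f' b| * (((b - a) / 2) ^ (α + 2) / (α + 2))) /
        ((b - a) * α)) := by
  rw [← integral_rpow_sub_mul_chordPrimitive_sub hab hα]
  exact abs_mul_integral_sub_integral_le (by linarith) hα
    (fun x hx => (hf x ⟨hx.1, by linarith [hx.2]⟩).continuousAt.continuousWithinAt) hg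
    (continuous_const.sub (continuous_chordPrimitive _ _ _ _)).continuousOn hgM
    (fun t ht => abs_sub_le_chordPrimitive_sub hab hf hconv ht.1 ht.2 (by linarith))

theorem abs_mul_add_sub_add_le {c x I₁ I₂ J₁ J₂ B₁ B₂ : ℝ} (hc : 0 ≤ c)
    (h₁ : |x * I₁ - J₁| ≤ B₁) (h₂ : |x * I₂ - J₂| ≤ B₂) :
    |x * (c * I₁ + c * I₂) - (c * J₁ + c * J₂)| ≤ c * B₁ + c * B₂ := by
  calc |x * (c * I₁ + c * I₂) - (c * J₁ + c * J₂)| = |c * (x * I₁ - J₁) + c * (x * I₂ - J₂)| := by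
        congr 1
        ring
    _ ≤ c * |x * I₁ - J₁| + c * |x * I₂ - J₂| := by
        refine (abs_add_le _ _).trans_eq ?_
        rw [abs_mul, abs_mul, abs_of_nonneg hc]
    _ ≤ c * B₁ + c * B₂ := by gcongr

theorem ContinuousOn.abs_le_sSup_image_abs {g : ℝ → ℝ} {c d t : ℝ} (hg : ContinuousOn g (Icc c d))
    (ht : t ∈ Icc c d) : |g t| ≤ sSup ((fun x => |g x|) '' Icc c d) :=
  le_csSup (isCompact_Icc.bddAbove_image hg.abs) (mem_image_of_mem _ ht)

theorem fejer_fractional_bound_general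
    (f f' g : ℝ → ℝ) (a b α : ℝ) (hab : a < b) (hα : 0 < α)
    (hf : ∀ x ∈ Set.Ioo a b, HasDerivAt f (f' x) x)
    (hconv : ConvexOn ℝ (Set.Icc a b) (fun x => |f' x|))
    (hg : ContinuousOn g (Set.Icc a b)) :
    |f ((a + b) / 2) *
        ((1 / Real.Gamma α) * (∫ t in a..(a + b) / 2, (t - a) ^ (α - 1) * g t) +
          (1 / Real.Gamma α) * ∫ t in ((a + b) / 2)..b, (b - t) ^ (α - 1) * g t) -
      ((1 / Real.Gamma α) * (∫ t in a..(a + b) / 2, (t - a) ^ (α - 1) * (g t * f t)) +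
        (1 / Real.Gamma α) * ∫ t in ((a + b) / 2)..b, (b - t) ^ (α - 1) * (g t * f t))| ≤
    (sSup ((fun x => |g x|) '' Set.Icc a ((a + b) / 2)) / ((b - a) * Real.Gamma (α + 1))) *
      (|f' a| * (((b - a) / 2) ^ (α + 1) * (b - a) / (α + 1) -
          ((b - a) / 2) ^ (α + 2) / (α + 2)) +
        |f' b| * (((b - a) / 2) ^ (α + 2) / (α + 2))) +
    (sSup ((fun x => |g x|) '' Set.Icc ((a + b) / 2) b) / ((b - a) * Real.Gamma (α + 1))) *
      (|f' b| * (((b - a) / 2) ^ (α + 1) * (b - a) / (α + 1) -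
          ((b - a) / 2) ^ (α + 2) / (α + 2)) +
        |f' a| * (((b - a) / 2) ^ (α + 2) / (α + 2))) := by
  have hmid : a + b - (a + b) / 2 = (a + b) / 2 := by ring
  have hg₁ : ContinuousOn g (Icc a ((a + b) / 2)) := hg.mono (Icc_subset_Icc_right (by linarith))
  have hg₂ : ContinuousOn g (Icc ((a + b) / 2) b) := hg.mono (Icc_subset_Icc_left (by linarith))
  have hleft := abs_midpoint_mul_integral_sub_integral_le (α := α) hab hα hf hconv hg₁
    fun t ht => hg₁.abs_le_sSup_image_abs ht
  have hright := abs_midpoint_mul_integral_sub_integral_le (α := α) (f := fun t => f (a + b - t))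
    (f' := fun t => -f' (a + b - t)) hab hα
    (fun x hx => (hf (a + b - x) ⟨by linarith [hx.2], by linarith [hx.1]⟩).comp_const_sub (a + b) x)
    (by simpa only [abs_neg] using hconv.comp_reflect)
    (hg₂.comp (by fun_prop : Continuous fun x : ℝ => a + b - x).continuousOn fun x hx =>
      ⟨by linarith [hx.2], by linarith [hx.1]⟩)
    fun t ht => hg₂.abs_le_sSup_image_abs ⟨by linarith [ht.2], by linarith [ht.1]⟩
  simp only [hmid, add_sub_cancel_left, add_sub_cancel_right, abs_neg] at hright
  rw [integral_rpow_sub_comp_reflect _ a, integral_rpow_sub_comp_reflect _ a, hmid]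
  refine (abs_mul_add_sub_add_le (one_div_nonneg.2 (Real.Gamma_pos_of_pos hα).le) hleft
    hright).trans_eq ?_
  have hba : b - a ≠ 0 := sub_ne_zero.2 hab.ne'
  rw [Real.Gamma_add_one hα.ne']
  field_simp

theorem fejer_fractional_bound
    (f f' g : ℝ → ℝ) (a b α : ℝ) (hab : a < b) (hα : 0 < α)
    (hf : ∀ x ∈ Set.Ioo a b, HasDerivAt f (f' x) x)
    (hf' : IntervalIntegrable f' MeasureTheory.volume a b)
    (hconv : ConvexOn ℝ (Set.Icc a b) (fun x => |f' x|))
    (hg : ContinuousOn g (Set.Icc a b)) :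
    |f ((a + b) / 2) *
        ((1 / Real.Gamma α) * (∫ t in a..(a + b) / 2, (t - a) ^ (α - 1) * g t) +
          (1 / Real.Gamma α) * ∫ t in ((a + b) / 2)..b, (b - t) ^ (α - 1) * g t) -
      ((1 / Real.Gamma α) * (∫ t in a..(a + b) / 2, (t - a) ^ (α - 1) * (g t * f t)) +
        (1 / Real.Gamma α) * ∫ t in ((a + b) / 2)..b, (b - t) ^ (α - 1) * (g t * f t))| ≤
    (sSup ((fun x => |g x|) '' Set.Icc a ((a + b) / 2)) / ((b - a) * Real.Gamma (α + 1))) *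
      (|f' a| * (((b - a) / 2) ^ (α + 1) * (b - a) / (α + 1) -
          ((b - a) / 2) ^ (α + 2) / (α + 2)) +
        |f' b| * (((b - a) / 2) ^ (α + 2) / (α + 2))) +
    (sSup ((fun x => |g x|) '' Set.Icc ((a + b) / 2) b) / ((b - a) * Real.Gamma (α + 1))) *
      (|f' b| * (((b - a) / 2) ^ (α + 1) * (b - a) / (α + 1) -
          ((b - a) / 2) ^ (α + 2) / (α + 2)) +
        |f' a| * (((b - a) / 2) ^ (α + 2) / (α + 2))) :=
  fejer_fractional_bound_general f f' g a b α hab hα hf hconv hg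
end
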